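/- The reduction number of a canonical ideal is an invariant: if C and D are canonical ideals of a Cohen-Macaulay local ring R, then red(C) = red(D). -/

import Mathlib

open IsLocalRing

/-- `J` is a reduction of `I`. -/
def IsReductionOf (R : Type*) [CommRing R] (J I : Ideal R) : Prop :=
  J ≤ I ∧ ∃ n : ℕ, I ^ (n + 1) = J * I ^ n

/-- `J` is a minimal reduction of `I`: a reduction containing no strictly smaller reduction. -/
def IsMinimalReduction (R : Type*) [CommRing R] (J I : Ideal R) : Prop :=
  IsReductionOf R J I ∧ ∀ J' : Ideal R, J' ≤ J → IsReductionOf R J' I → J' = J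

/-- `r` is the reduction number of `I`: the least `r` with `I^(r+1) = J·I^r` for some
minimal reduction `J` of `I`. -/
def HasReductionNumber (R : Type*) [CommRing R] (I : Ideal R) (r : ℕ) : Prop :=
  (∃ J : Ideal R, IsMinimalReduction R J I ∧ I ^ (r + 1) = J * I ^ r) ∧
    ∀ s : ℕ, (∃ J : Ideal R, IsMinimalReduction R J I ∧ I ^ (s + 1) = J * I ^ s) → r ≤ s

/-- Two ideals are isomorphic as `R`-modules: they differ by multiplication by a unit `x/y`
of the total ring of fractions. -/
def IsIsomIdeal (R : Type*) [CommRing R] (I J : Ideal R) : Prop :=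
  ∃ x ∈ nonZeroDivisors R, ∃ y ∈ nonZeroDivisors R, Ideal.span {x} * I = Ideal.span {y} * J

/-!
If `x C = y D` with `x`, `y` regular, then `J ↦ (y/x) J` is an inclusion-preserving bijection
from the ideals contained in `D` onto those contained in `C`, and it is compatible with
products: `x^(k+1) C^(k+1) = y^(k+1) D^(k+1)`. Hence it carries minimal reductions of `D` to
minimal reductions of `C`, and a relation `D^(k+1) = J D^k` to `C^(k+1) = J' C^k`, so both
ideals attain the same exponents `k` and have the same reduction number.
-/

open Ideal
open scoped nonZeroDivisors

namespace Ideal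

variable {R : Type*} [CommRing R] {x : R} {I J : Ideal R}

theorem span_singleton_mul_right_mono_of_mem_nonZeroDivisors (hx : x ∈ R⁰) :
    span {x} * I ≤ span {x} * J ↔ I ≤ J := by
  simp_rw [span_singleton_mul_le_span_singleton_mul, mul_cancel_left_mem_nonZeroDivisors hx,
    exists_eq_right', SetLike.le_def]

theorem span_singleton_mul_right_inj_of_mem_nonZeroDivisors (hx : x ∈ R⁰) :
    span {x} * I = span {x} * J ↔ I = J := by
  simp only [le_antisymm_iff, span_singleton_mul_right_mono_of_mem_nonZeroDivisors hx]

theorem exists_span_singleton_mul_eq_of_le (h : I ≤ span {x}) : ∃ J, span {x} * J = I := by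
  refine ⟨I.colon (span {x}),
    ((eq_span_singleton_mul _ _).mpr ⟨fun z hz => ?_, fun z hz => ?_⟩).symm⟩
  · obtain ⟨a, rfl⟩ := mem_span_singleton'.mp (h hz)
    exact ⟨a, mem_colon_span_singleton.mpr hz, mul_comm x a⟩
  · rw [mul_comm]
    exact mem_colon_span_singleton.mp hz

end Ideal

section Scaling

variable {R : Type*} [CommRing R] {x y : R} {C D J J' : Ideal R}

theorem pow_succ_eq_mul_pow_of_span_singleton_mul_eq (hx : x ∈ R⁰)
    (hCD : span {x} * C = span {y} * D) (hJ : span {x} * J' = span {y} * J) {k : ℕ}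
    (hk : D ^ (k + 1) = J * D ^ k) : C ^ (k + 1) = J' * C ^ k := by
  rw [← span_singleton_mul_right_inj_of_mem_nonZeroDivisors (pow_mem hx (k + 1)),
    ← span_singleton_pow]
  calc span {x} ^ (k + 1) * C ^ (k + 1) = (span {y} * D) ^ (k + 1) := by rw [← hCD, mul_pow]
    _ = (span {y} * J) * (span {y} * D) ^ k := by rw [mul_pow, hk]; ring
    _ = span {x} ^ (k + 1) * (J' * C ^ k) := by rw [← hJ, ← hCD]; ring

theorem le_of_span_singleton_mul_eq (hx : x ∈ R⁰) (hCD : span {x} * C = span {y} * D)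
    (hJ : span {x} * J' = span {y} * J) (hJD : J ≤ D) : J' ≤ C := by
  rw [← span_singleton_mul_right_mono_of_mem_nonZeroDivisors hx, hJ, hCD]
  exact mul_mono_right hJD

theorem IsReductionOf.of_span_singleton_mul_eq (hx : x ∈ R⁰)
    (hCD : span {x} * C = span {y} * D) (hJ : span {x} * J' = span {y} * J)
    (h : IsReductionOf R J D) : IsReductionOf R J' C :=
  let ⟨hJD, n, hn⟩ := h
  ⟨le_of_span_singleton_mul_eq hx hCD hJ hJD, n,
    pow_succ_eq_mul_pow_of_span_singleton_mul_eq hx hCD hJ hn⟩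

theorem IsMinimalReduction.of_span_singleton_mul_eq (hx : x ∈ R⁰) (hy : y ∈ R⁰)
    (hCD : span {x} * C = span {y} * D) (hJ : span {x} * J' = span {y} * J)
    (h : IsMinimalReduction R J D) : IsMinimalReduction R J' C := by
  refine ⟨h.1.of_span_singleton_mul_eq hx hCD hJ, fun K hKJ' hK => ?_⟩
  obtain ⟨L, hL⟩ : ∃ L, span {y} * L = span {x} * K :=
    exists_span_singleton_mul_eq_of_le <| (mul_mono_right hKJ').trans (hJ.trans_le mul_le_left)
  have hLJ : L = J :=
    h.2 L (le_of_span_singleton_mul_eq hy hJ.symm hL hKJ')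
      (hK.of_span_singleton_mul_eq hy hCD.symm hL)
  rw [← span_singleton_mul_right_inj_of_mem_nonZeroDivisors hx, hJ, ← hLJ, hL]

end Scaling

section Invariance

variable {R : Type*} [CommRing R] {C D : Ideal R}

theorem IsIsomIdeal.symm (h : IsIsomIdeal R C D) : IsIsomIdeal R D C :=
  let ⟨x, hx, y, hy, hxy⟩ := h
  ⟨y, hy, x, hx, hxy.symm⟩

theorem IsIsomIdeal.exists_isMinimalReduction_pow_succ_eq (h : IsIsomIdeal R C D) {k : ℕ}
    (hD : ∃ J, IsMinimalReduction R J D ∧ D ^ (k + 1) = J * D ^ k) :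
    ∃ J', IsMinimalReduction R J' C ∧ C ^ (k + 1) = J' * C ^ k := by
  obtain ⟨x, hx, y, hy, hCD⟩ := h
  obtain ⟨J, hJ, hk⟩ := hD
  obtain ⟨J', hJ'⟩ : ∃ J', span {x} * J' = span {y} * J :=
    exists_span_singleton_mul_eq_of_le <|
      (mul_mono_right hJ.1.1).trans (hCD.symm.trans_le mul_le_left)
  exact ⟨J', hJ.of_span_singleton_mul_eq hx hy hCD hJ',
    pow_succ_eq_mul_pow_of_span_singleton_mul_eq hx hCD hJ' hk⟩

theorem HasReductionNumber.of_isIsomIdeal {s : ℕ} (h : IsIsomIdeal R C D)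
    (hs : HasReductionNumber R D s) : HasReductionNumber R C s :=
  ⟨h.exists_isMinimalReduction_pow_succ_eq hs.1,
    fun t ht => hs.2 t (h.symm.exists_isMinimalReduction_pow_succ_eq ht)⟩

theorem HasReductionNumber.unique {r s : ℕ} (hr : HasReductionNumber R C r)
    (hs : HasReductionNumber R C s) : r = s :=
  le_antisymm (hr.2 s hs.1) (hs.2 r hr.1)

end Invariance

theorem reduction_number_canonical_invariant_general
    (R : Type*) [CommRing R]
    (C D : Ideal R)
    (hiso : IsIsomIdeal R C D)
    (r s : ℕ)
    (hr : HasReductionNumber R C r) (hs : HasReductionNumber R D s) :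
    r = s :=
  hr.unique (hs.of_isIsomIdeal hiso)

/-- the reduction number of a canonical ideal is an invariant: if `C` and `D` are
canonical ideals of a Cohen-Macaulay local ring `R`, then `red(C) = red(D)`.  Canonical
ideals contain regular elements and, being canonical modules, are unique up to
multiplication by a unit of the total ring of fractions (`IsIsomIdeal`). -/
theorem reduction_number_canonical_invariant
    (R : Type*) [CommRing R] [IsLocalRing R] [IsNoetherianRing R]
    [Infinite (ResidueField R)]
    (hdim : 1 ≤ ringKrullDim R)
    (C D : Ideal R)
    (hCreg : ∃ x ∈ C, x ∈ nonZeroDivisors R)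
    (hDreg : ∃ x ∈ D, x ∈ nonZeroDivisors R)
    (hiso : IsIsomIdeal R C D)
    (r s : ℕ)
    (hr : HasReductionNumber R C r) (hs : HasReductionNumber R D s) :
    r = s :=
  reduction_number_canonical_invariant_general R C D hiso r s hr hs
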